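/- arXiv:1102.5257 — 4 statements merged into one kernel-verified Lean document; each statement's English description precedes it below -/
import Mathlib

section
/- For all positive reals λ and t, (1 + λt)/(2t) ≤ 2λ/(1 - e^{-2λt}) ≤ 2(1 + λt)/t. -/
open Real

theorem stmt_1 (l t : ℝ) (hl : 0 < l) (ht : 0 < t) :
    (1 + l * t) / (2 * t) ≤ 2 * l / (1 - Real.exp (-2 * l * t)) ∧
      2 * l / (1 - Real.exp (-2 * l * t)) ≤ 2 * (1 + l * t) / t := by
  set E := Real.exp (-2 * l * t) with hE
  have hxpos : 0 < 2 * l * t := by positivity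
  have hE0 : 0 < E := Real.exp_pos _
  have hE1 : E < 1 := by
    rw [hE, Real.exp_lt_one_iff]; linarith
  have hu : 0 < 1 - E := by linarith
  -- E ≥ 1 - 2lt
  have h2 : 1 - 2 * l * t ≤ E := by
    have := Real.add_one_le_exp (-2 * l * t)
    linarith
  -- E * (1 + 2lt) ≤ 1
  have h3 : E * (1 + 2 * l * t) ≤ 1 := by
    have h4 : 1 + 2 * l * t ≤ Real.exp (2 * l * t) := by
      have := Real.add_one_le_exp (2 * l * t); linarith
    have h5 : E * Real.exp (2 * l * t) = 1 := by
      rw [hE, ← Real.exp_add]; norm_num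
    nlinarith [hE0]
  constructor
  · rw [div_le_div_iff₀ (by positivity) hu]
    nlinarith [mul_pos hl ht, mul_le_of_le_one_right (le_of_lt (mul_pos hl ht)) (le_of_lt hE1)]
  · rw [div_le_div_iff₀ hu ht]
    nlinarith [mul_pos hE0 (mul_pos hl ht)]
end

section
/- Let a, b be m×m symmetric positive definite real matrices with Λ_0 I ≤ a, b ≤ Λ_1 I, and set θ = Λ_0^{-1} m ‖a - b‖. Then |det(b)/det(a) - 1| ≤ θ e^θ. -/
/-!
Both `b ≤ a + ‖a - b‖` and `a ≤ b + ‖a - b‖` hold in the Loewner order, and `Λ₀ ≤ a, b` turns the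
additive bound into the multiplicative one `b ≤ (1 + Λ₀⁻¹ ‖a - b‖) a` (and symmetrically). Since
the determinant is monotone on positive semidefinite matrices, `det b / det a` and its inverse are
at most `(1 + Λ₀⁻¹ ‖a - b‖) ^ m ≤ e^θ`, and a ratio `r` with `r, r⁻¹ ≤ e^θ` satisfies
`|r - 1| ≤ θ e^θ`.
-/

open Matrix
open scoped MatrixOrder RealInnerProductSpace

namespace Real

lemma one_add_pow_le_exp_mul {x : ℝ} (hx : 0 ≤ 1 + x) (n : ℕ) : (1 + x) ^ n ≤ exp (n * x) :=
  calc (1 + x) ^ n ≤ exp x ^ n := pow_le_pow_left₀ hx (by linarith [add_one_le_exp x]) n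
    _ = exp (n * x) := (exp_nat_mul x n).symm

lemma abs_sub_one_le_mul_exp {r θ : ℝ} (hr : 0 < r) (h : r ≤ exp θ) (h' : r⁻¹ ≤ exp θ) :
    |r - 1| ≤ θ * exp θ := by
  have hθ : 0 ≤ θ := by
    by_contra! hθ
    have hexp : exp θ < 1 := exp_lt_one_iff.mpr hθ
    have : 1 < r⁻¹ := (one_lt_inv₀ hr).mpr (h.trans_lt hexp)
    linarith
  have hexp_neg : 1 - θ ≤ exp (-θ) := by linarith [add_one_le_exp (-θ)]
  have hr_low : exp (-θ) ≤ r := by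
    rw [exp_neg]
    exact inv_le_of_inv_le₀ hr h'
  have hexp_mul : exp (-θ) * exp θ = 1 := by rw [← exp_add, neg_add_cancel, exp_zero]
  rw [abs_le]
  constructor
  · have : θ ≤ θ * exp θ := le_mul_of_one_le_right hθ (one_le_exp hθ)
    linarith
  · have : (1 - θ) * exp θ ≤ 1 :=
      (mul_le_mul_of_nonneg_right hexp_neg (exp_pos θ).le).trans_eq hexp_mul
    linarith

end Real

namespace Matrix

variable {n : Type*} [DecidableEq n]

lemma posDef_of_smul_one_le {A : Matrix n n ℝ} {L : ℝ} (hL : 0 < L) (h : L • 1 ≤ A) :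
    A.PosDef := by
  simpa using (PosDef.one.smul hL).add_posSemidef h

variable [Fintype n]

lemma le_one_add_inv_mul_smul_of_sub_le {p q : Matrix n n ℝ} {L c : ℝ} (hL : 0 < L) (hc : 0 ≤ c)
    (hp : L • 1 ≤ p) (hqp : q - p ≤ c • 1) : q ≤ (1 + L⁻¹ * c) • p := by
  have hcp : c • (1 : Matrix n n ℝ) ≤ (L⁻¹ * c) • p :=
    calc c • (1 : Matrix n n ℝ) = (L⁻¹ * c) • L • 1 := by rw [smul_smul]; field_simp
      _ ≤ (L⁻¹ * c) • p := smul_le_smul_of_nonneg_left hp (by positivity)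
  calc q = p + (q - p) := (add_sub_cancel p q).symm
    _ ≤ p + c • 1 := add_le_add_right hqp p
    _ ≤ p + (L⁻¹ * c) • p := add_le_add_right hcp p
    _ = (1 + L⁻¹ * c) • p := by rw [add_smul, one_smul]

lemma le_norm_toEuclideanCLM_smul_one {M : Matrix n n ℝ} (hM : M.IsHermitian) :
    M ≤ ‖toEuclideanCLM (𝕜 := ℝ) M‖ • (1 : Matrix n n ℝ) := by
  set c := ‖toEuclideanCLM (𝕜 := ℝ) M‖
  rw [le_iff]
  refine PosSemidef.of_dotProduct_mulVec_nonneg ((isHermitian_one.smul (.all c)).sub hM)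
    fun x => ?_
  set y : EuclideanSpace ℝ n := WithLp.toLp 2 x
  have hquad : x ⬝ᵥ M *ᵥ x ≤ c * (x ⬝ᵥ x) :=
    calc x ⬝ᵥ M *ᵥ x = ⟪y, toEuclideanCLM (𝕜 := ℝ) M y⟫ := (inner_toEuclideanCLM M y y).symm
      _ ≤ ‖y‖ * (c * ‖y‖) := (real_inner_le_norm _ _).trans
          (mul_le_mul_of_nonneg_left ((toEuclideanCLM (𝕜 := ℝ) M).le_opNorm y) (norm_nonneg _))
      _ = c * ⟪y, y⟫ := by rw [real_inner_self_eq_norm_mul_norm]; ring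
      _ = c * (x ⬝ᵥ x) := by rw [EuclideanSpace.inner_eq_star_dotProduct]; simp [y]
  simpa [sub_mulVec, smul_mulVec, dotProduct_smul] using hquad

lemma one_le_det_of_one_le {X : Matrix n n ℝ} (h : 1 ≤ X) : 1 ≤ X.det := by
  have hX : X.IsHermitian := by simpa using (le_iff.mp h).isHermitian.add isHermitian_one
  rw [hX.det_eq_prod_eigenvalues]
  refine Finset.one_le_prod fun i _ => ?_
  have := (algebraMap_le_iff_le_spectrum (r := (1 : ℝ)) (a := X) hX.isSelfAdjoint).mp
    (by simpa using h) _ (hX.eigenvalues_mem_spectrum_real i)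
  simpa using this

lemma det_le_det_of_le {A B : Matrix n n ℝ} (hA : 0 ≤ A) (h : A ≤ B) : A.det ≤ B.det := by
  by_cases hdet : A.det = 0
  · rw [hdet]
    exact (hA.trans h).posSemidef.det_nonneg
  have hS : IsStrictlyPositive (CFC.sqrt A) :=
    (hA.posSemidef.posDef_iff_det_ne_zero.mpr hdet).isStrictlyPositive.sqrt
  set S := CFC.sqrt A
  have hSS : S * S = A := CFC.sqrt_mul_sqrt_self A
  have hSdet : IsUnit S.det := (isUnit_iff_isUnit_det S).mp hS.isUnit
  have hX : 1 ≤ S⁻¹ * B * S⁻¹ :=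
    calc (1 : Matrix n n ℝ) = S⁻¹ * A * S⁻¹ := by
          rw [← hSS, Matrix.mul_assoc, mul_nonsing_inv_cancel_right _ _ hSdet,
            nonsing_inv_mul _ hSdet]
      _ ≤ S⁻¹ * B * S⁻¹ := IsSelfAdjoint.conjugate_le_conjugate h (IsHermitian.inv hS.isSelfAdjoint)
  have hdetX := one_le_det_of_one_le hX
  rw [det_mul, det_mul, det_nonsing_inv, Ring.inverse_eq_inv'] at hdetX
  have hdetA : A.det = S.det * S.det := by rw [← det_mul, hSS]
  have hdetS : S.det ≠ 0 := hSdet.ne_zero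
  calc A.det = A.det * 1 := (mul_one _).symm
    _ ≤ A.det * (S.det⁻¹ * B.det * S.det⁻¹) :=
        mul_le_mul_of_nonneg_left hdetX hA.posSemidef.det_nonneg
    _ = B.det := by rw [hdetA]; field_simp

end Matrix

theorem stmt_10_general (m : ℕ) (L0 : ℝ) (hL0 : 0 < L0)
    (a b : Matrix (Fin m) (Fin m) ℝ)
    (ha0 : (a - L0 • (1 : Matrix (Fin m) (Fin m) ℝ)).PosSemidef)
    (hb0 : (b - L0 • (1 : Matrix (Fin m) (Fin m) ℝ)).PosSemidef) :
    |b.det / a.det - 1| ≤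
      (L0⁻¹ * m * ‖Matrix.toEuclideanCLM (𝕜 := ℝ) (a - b)‖) *
        Real.exp (L0⁻¹ * m * ‖Matrix.toEuclideanCLM (𝕜 := ℝ) (a - b)‖) := by
  set c := ‖toEuclideanCLM (𝕜 := ℝ) (a - b)‖
  set θ := L0⁻¹ * m * c
  have ha : a.PosDef := posDef_of_smul_one_le hL0 ha0
  have hb : b.PosDef := posDef_of_smul_one_le hL0 hb0
  have hab : a - b ≤ c • 1 := le_norm_toEuclideanCLM_smul_one (ha.1.sub hb.1)
  have hba : b - a ≤ c • 1 := by
    have := le_norm_toEuclideanCLM_smul_one (hb.1.sub ha.1)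
    rwa [← neg_sub a b, map_neg, norm_neg, neg_sub] at this
  have hdet {p q : Matrix (Fin m) (Fin m) ℝ} (hp : L0 • 1 ≤ p) (hq : 0 ≤ q) (hqp : q - p ≤ c • 1) :
      q.det ≤ Real.exp θ * p.det :=
    calc q.det ≤ ((1 + L0⁻¹ * c) • p).det :=
          det_le_det_of_le hq (le_one_add_inv_mul_smul_of_sub_le hL0 (norm_nonneg _) hp hqp)
      _ = (1 + L0⁻¹ * c) ^ m * p.det := by rw [det_smul, Fintype.card_fin]
      _ ≤ Real.exp θ * p.det := by
          refine mul_le_mul_of_nonneg_right ?_ (posDef_of_smul_one_le hL0 hp).det_pos.le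
          simpa [θ, mul_assoc, mul_left_comm] using
            Real.one_add_pow_le_exp_mul (by positivity : 0 ≤ 1 + L0⁻¹ * c) m
  refine Real.abs_sub_one_le_mul_exp (div_pos hb.det_pos ha.det_pos) ?_ ?_
  · rw [div_le_iff₀ ha.det_pos]
    exact hdet ha0 hb.posSemidef.nonneg hba
  · rw [inv_div, div_le_iff₀ hb.det_pos]
    exact hdet hb0 ha.posSemidef.nonneg hab

theorem stmt_10 (m : ℕ) (L0 L1 : ℝ) (hL0 : 0 < L0) (hL01 : L0 ≤ L1)
    (a b : Matrix (Fin m) (Fin m) ℝ) (has : a.IsSymm) (hbs : b.IsSymm)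
    (ha0 : (a - L0 • (1 : Matrix (Fin m) (Fin m) ℝ)).PosSemidef)
    (ha1 : (L1 • (1 : Matrix (Fin m) (Fin m) ℝ) - a).PosSemidef)
    (hb0 : (b - L0 • (1 : Matrix (Fin m) (Fin m) ℝ)).PosSemidef)
    (hb1 : (L1 • (1 : Matrix (Fin m) (Fin m) ℝ) - b).PosSemidef) :
    |b.det / a.det - 1| ≤
      (L0⁻¹ * m * ‖Matrix.toEuclideanCLM (𝕜 := ℝ) (a - b)‖) *
        Real.exp (L0⁻¹ * m * ‖Matrix.toEuclideanCLM (𝕜 := ℝ) (a - b)‖) :=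
  stmt_10_general m L0 hL0 a b ha0 hb0
end

section
/- For all r > 0 and γ > 1 there exists a constant c = c(r, γ) such that for all positive integers N and all integers k ≥ 0: Σ_{m=1}^N m^r / (1 + |m - k|^γ) ≤ c ( N^{max(1 + r - γ, 0)} + (if γ = 1 + r then log N else 0) + k^r ). -/
/-!
Pointwise, `m ^ r / (1 + |m - k| ^ γ) ≤ (2k) ^ r / (1 + |m - k| ^ γ) + 2 ^ γ m ^ (r - γ)`:
if `m ≤ 2k` then `m ^ r ≤ (2k) ^ r`, and otherwise `|m - k| ≥ m / 2`. Summed over `m`, the weights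
`1 / (1 + |m - k| ^ γ)` are dominated by the convergent series `∑ n : ℤ, 1 / (1 + |n| ^ γ)`, while
`∑_{m ≤ N} m ^ s` is bounded, of order `log N`, or of order `N ^ (1 + s)` according as `s < -1`,
`s = -1` or `s > -1`.
-/

open Finset

theorem summable_one_div_one_add_abs_int_rpow {γ : ℝ} (hγ : 1 < γ) :
    Summable fun n : ℤ => 1 / (1 + |(n : ℝ)| ^ γ) := by
  refine .of_norm_bounded_eventually (Real.summable_abs_int_rpow hγ) ?_
  filter_upwards [Filter.eventually_cofinite_ne 0] with n hn
  have hpos : 0 < |(n : ℝ)| ^ γ := by positivity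
  rw [Real.norm_of_nonneg (by positivity), Real.rpow_neg (abs_nonneg _), one_div]
  exact inv_anti₀ hpos (by linarith)

theorem sum_one_div_one_add_abs_sub_rpow_le {γ : ℝ} (hγ : 1 < γ) (s : Finset ℕ) (k : ℕ) :
    ∑ m ∈ s, 1 / (1 + |(m : ℝ) - k| ^ γ) ≤ ∑' n : ℤ, 1 / (1 + |(n : ℝ)| ^ γ) := by
  set f : ℤ → ℝ := fun n => 1 / (1 + |(n : ℝ)| ^ γ)
  have hf : Summable f := summable_one_div_one_add_abs_int_rpow hγ
  have hf₀ : ∀ n, 0 ≤ f n := fun n => by positivity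
  have hinj : Function.Injective fun m : ℕ => (m : ℤ) - k := fun a b h => by simpa using h
  calc ∑ m ∈ s, 1 / (1 + |(m : ℝ) - k| ^ γ) = ∑ m ∈ s, f ((m : ℤ) - k) := by simp [f]
    _ ≤ ∑' m : ℕ, f ((m : ℤ) - k) :=
      (hf.comp_injective hinj).sum_le_tsum s fun m _ => hf₀ _
    _ ≤ ∑' n, f n := tsum_comp_le_tsum_of_inj hf hf₀ hinj

theorem rpow_div_one_add_abs_sub_rpow_le {r γ : ℝ} (hr : 0 ≤ r) (hγ : 0 ≤ γ) {x y : ℝ}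
    (hx : 0 ≤ x) (hy : 0 ≤ y) :
    x ^ r / (1 + |x - y| ^ γ) ≤ (2 * y) ^ r / (1 + |x - y| ^ γ) + 2 ^ γ * x ^ (r - γ) := by
  have hden : 0 < 1 + |x - y| ^ γ := by positivity
  rcases le_or_gt x (2 * y) with hxy | hxy
  · have : x ^ r ≤ (2 * y) ^ r := Real.rpow_le_rpow hx hxy hr
    exact (div_le_div_of_nonneg_right this hden.le).trans (le_add_of_nonneg_right (by positivity))
  · have hx₀ : 0 < x := by linarith
    have hhalf : x / 2 ≤ |x - y| := by rw [abs_of_nonneg (by linarith)]; linarith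
    calc x ^ r / (1 + |x - y| ^ γ) ≤ x ^ r / (x / 2) ^ γ := by
          gcongr
          · linarith [Real.rpow_le_rpow (by positivity) hhalf hγ]
      _ = 2 ^ γ * x ^ (r - γ) := by
          rw [Real.div_rpow hx zero_le_two, Real.rpow_sub hx₀]; field_simp
      _ ≤ _ := le_add_of_nonneg_left (by positivity)

theorem sum_Icc_rpow_le_of_nonneg {s : ℝ} (hs : 0 ≤ s) (N : ℕ) :
    ∑ m ∈ Icc 1 N, (m : ℝ) ^ s ≤ (N : ℝ) ^ (1 + s) := by
  calc ∑ m ∈ Icc 1 N, (m : ℝ) ^ s ≤ ∑ _m ∈ Icc 1 N, (N : ℝ) ^ s := by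
        gcongr with m hm
        exact_mod_cast (mem_Icc.1 hm).2
    _ = (N : ℝ) ^ (1 + s) := by
        rw [sum_const, Nat.card_Icc, nsmul_eq_mul,
          Real.rpow_one_add' (Nat.cast_nonneg N) (by linarith)]
        simp

theorem sum_Icc_rpow_le_of_neg_one_lt_of_nonpos {s : ℝ} (hs : -1 < s) (hs₀ : s ≤ 0) {N : ℕ}
    (hN : 1 ≤ N) : ∑ m ∈ Icc 1 N, (m : ℝ) ^ s ≤ (N : ℝ) ^ (1 + s) / (1 + s) := by
  have hanti : AntitoneOn (fun x : ℝ => x ^ s) (Set.Icc (1 : ℕ) N) := fun x hx y _ hxy =>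
    Real.rpow_le_rpow_of_nonpos (zero_lt_one.trans_le (by simpa using hx.1)) hxy hs₀
  -- The comparison starts at `1`: `x ^ s` is not antitone on `[0, N]`, since `0 ^ s = 0`.
  have hint := hanti.sum_le_integral_Ico hN
  rw [integral_rpow (Or.inl hs)] at hint
  have hsplit : ∑ m ∈ Icc 1 N, (m : ℝ) ^ s = 1 + ∑ i ∈ Ico 1 N, ((i + 1 : ℕ) : ℝ) ^ s := by
    rw [← Ico_add_one_right_eq_Icc, sum_eq_sum_Ico_succ_bot (by omega),
      sum_Ico_add' (fun i : ℕ => (i : ℝ) ^ s)]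
    simp
  have h1 : 1 ≤ 1 / (1 + s) := by rw [le_div_iff₀ (by linarith)]; linarith
  rw [hsplit]
  simp only [Nat.cast_one, Real.one_rpow] at hint
  calc _ ≤ 1 + ((N : ℝ) ^ (s + 1) - 1) / (s + 1) := by gcongr
    _ ≤ _ := by rw [add_comm s, sub_div]; linarith

theorem sum_Icc_rpow_neg_one_le (N : ℕ) :
    ∑ m ∈ Icc 1 N, (m : ℝ) ^ (-1 : ℝ) ≤ 1 + Real.log N := by
  have : ∑ m ∈ Icc 1 N, (m : ℝ) ^ (-1 : ℝ) = harmonic N := by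
    simp [harmonic_eq_sum_Icc, Real.rpow_neg_one]
  exact this ▸ harmonic_le_one_add_log N

theorem exists_sum_Icc_rpow_le (s : ℝ) : ∃ C > 0, ∀ N : ℕ, 1 ≤ N →
    ∑ m ∈ Icc 1 N, (m : ℝ) ^ s ≤
      C * ((N : ℝ) ^ max (1 + s) 0 + if s = -1 then Real.log N else 0) := by
  rcases lt_trichotomy s (-1) with hs | rfl | hs
  · have hsum : Summable fun m : ℕ => (m : ℝ) ^ s := Real.summable_nat_rpow.2 hs
    refine ⟨∑' m : ℕ, (m : ℝ) ^ s + 1, by positivity, fun N _ => ?_⟩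
    rw [max_eq_right (by linarith), if_neg hs.ne, Real.rpow_zero, add_zero, mul_one]
    exact (hsum.sum_le_tsum _ fun m _ => by positivity).trans (le_add_of_nonneg_right zero_le_one)
  · refine ⟨1, one_pos, fun N _ => ?_⟩
    simpa using sum_Icc_rpow_neg_one_le N
  · have hs₁ : 0 < 1 + s := by linarith
    refine ⟨1 + 1 / (1 + s), by positivity, fun N hN => ?_⟩
    rw [max_eq_left hs₁.le, if_neg hs.ne', add_zero]
    have hNs : 0 ≤ (N : ℝ) ^ (1 + s) := by positivity
    rcases le_total 0 s with hs₀ | hs₀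
    · calc _ ≤ (N : ℝ) ^ (1 + s) := sum_Icc_rpow_le_of_nonneg hs₀ N
        _ ≤ _ := le_mul_of_one_le_left hNs (le_add_of_nonneg_right (by positivity))
    · calc _ ≤ (N : ℝ) ^ (1 + s) / (1 + s) := sum_Icc_rpow_le_of_neg_one_lt_of_nonpos hs hs₀ hN
        _ = 1 / (1 + s) * (N : ℝ) ^ (1 + s) := by ring
        _ ≤ _ := by gcongr; linarith

theorem sum_rpow_div_one_add_abs_sub_rpow_le {r γ : ℝ} (hr : 0 ≤ r) (hγ : 1 < γ)
    (s : Finset ℕ) (k : ℕ) :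
    ∑ m ∈ s, (m : ℝ) ^ r / (1 + |(m : ℝ) - k| ^ γ) ≤
      2 ^ r * (∑' n : ℤ, 1 / (1 + |(n : ℝ)| ^ γ)) * (k : ℝ) ^ r +
        2 ^ γ * ∑ m ∈ s, (m : ℝ) ^ (r - γ) := by
  calc ∑ m ∈ s, (m : ℝ) ^ r / (1 + |(m : ℝ) - k| ^ γ)
      ≤ ∑ m ∈ s, ((2 * k) ^ r / (1 + |(m : ℝ) - k| ^ γ) + 2 ^ γ * (m : ℝ) ^ (r - γ)) :=
        sum_le_sum fun m _ =>
          rpow_div_one_add_abs_sub_rpow_le hr (by linarith) m.cast_nonneg k.cast_nonneg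
    _ = 2 ^ r * (∑ m ∈ s, 1 / (1 + |(m : ℝ) - k| ^ γ)) * (k : ℝ) ^ r +
          2 ^ γ * ∑ m ∈ s, (m : ℝ) ^ (r - γ) := by
        simp only [sum_add_distrib, mul_sum, sum_mul, Real.mul_rpow zero_le_two k.cast_nonneg]
        congr 1
        exact sum_congr rfl fun m _ => by ring
    _ ≤ _ := by gcongr; exact sum_one_div_one_add_abs_sub_rpow_le hγ s k

open scoped Classical

theorem stmt_12 (r γ : ℝ) (hr : 0 < r) (hγ : 1 < γ) :
    ∃ c : ℝ, 0 < c ∧ ∀ (N : ℕ), 1 ≤ N → ∀ (k : ℕ),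
      ∑ m ∈ Finset.Icc 1 N, (m : ℝ) ^ r / (1 + |(m : ℝ) - (k : ℝ)| ^ γ) ≤
        c * ((N : ℝ) ^ (max (1 + r - γ) 0) +
          (if γ = 1 + r then Real.log N else 0) + (k : ℝ) ^ r) := by
  obtain ⟨C, hC, htail⟩ := exists_sum_Icc_rpow_le (r - γ)
  set T := ∑' n : ℤ, 1 / (1 + |(n : ℝ)| ^ γ)
  have hT : 0 ≤ T := tsum_nonneg fun n => by positivity
  refine ⟨2 ^ r * T + 2 ^ γ * C, by positivity, fun N hN k => ?_⟩
  have hγr : r - γ = -1 ↔ γ = 1 + r := by constructor <;> intro h <;> linarith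
  have hbound := htail N hN
  simp only [hγr, show 1 + (r - γ) = 1 + r - γ by ring] at hbound
  set P := (N : ℝ) ^ max (1 + r - γ) 0 + if γ = 1 + r then Real.log N else 0
  have hP : 0 ≤ P := add_nonneg (by positivity) (by split_ifs <;> simp [Real.log_natCast_nonneg])
  have hK : 0 ≤ (k : ℝ) ^ r := by positivity
  calc _ ≤ 2 ^ r * T * (k : ℝ) ^ r + 2 ^ γ * (C * P) := by
        grw [sum_rpow_div_one_add_abs_sub_rpow_le hr.le hγ _ k, hbound]
    _ ≤ (2 ^ r * T + 2 ^ γ * C) * (P + (k : ℝ) ^ r) := by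
        have hA : 0 ≤ 2 ^ r * T := mul_nonneg (by positivity) hT
        have hB : 0 ≤ 2 ^ γ * C := by positivity
        nlinarith [mul_nonneg hA hP, mul_nonneg hB hK]
end

section
/- Suppose a : ℓ² → (symmetric matrices indexed by ℕ×ℕ) satisfies: (i) |a_{ij}(x) - a_{ij}(y)| ≤ 2κ_γ/(1 + |i-j|^γ) for a constant κ_γ and some γ > 2, and (ii) |a_{ij}(x) - a_{ij}(y)| ≤ κ_β Σ_k |x_k - y_k|^α k^{-β} with α ∈ (1/2, 1] and 2β > 2 - α. Then there exists a constant c such that for all x, y ∈ ℓ², sup_i Σ_j |a_{ij}(x) - a_{ij}(y)| ≤ c ‖x - y‖^{α/2}, where ‖·‖ is the ℓ² norm. -/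
/-!
Both hypotheses bound the same entry `|a x i j - a y i j|`: (i) by `2κ_γ / (1 + |i - j|^γ)`, whose
square root is summable in `j` because `γ / 2 > 1`, and (ii), after Hölder's inequality with
exponents `2 / α` and `2 / (2 - α)`, by a constant times `‖x - y‖^α`, uniformly in `j`. As
`min r s ≤ √(r s)`, each entry is at most the geometric mean of the two bounds, and summing over `j`
gives a row sum of order `‖x - y‖^(α / 2)`.
-/

open scoped ENNReal

theorem tsum_abs_rpow_mul_le_norm_rpow_mul {ι : Type*} {α : ℝ} (hα0 : 0 < α) (hα2 : α < 2)
    (z : lp (fun _ : ι => ℝ) 2) {w : ι → ℝ} (hw0 : ∀ k, 0 ≤ w k)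
    (hw : Summable fun k => w k ^ (2 / (2 - α))) :
    ∑' k, |z k| ^ α * w k ≤ ‖z‖ ^ α * (∑' k, w k ^ (2 / (2 - α))) ^ ((2 - α) / 2) := by
  have hpq : (2 / α).HolderConjugate (2 / (2 - α)) :=
    Real.holderConjugate_iff.mpr ⟨by rw [lt_div_iff₀ hα0]; linarith, by simp only [inv_div]; ring⟩
  have hz_pow (k : ι) : (|z k| ^ α) ^ (2 / α) = ‖z k‖ ^ (2 : ℝ≥0∞).toReal := by
    rw [← Real.rpow_mul (abs_nonneg _), mul_div_cancel₀ _ hα0.ne', Real.norm_eq_abs]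
    norm_num
  have hz : Summable fun k => (|z k| ^ α) ^ (2 / α) := by
    simpa only [hz_pow] using (lp.memℓp z).summable (by norm_num)
  refine (Real.inner_le_Lp_mul_Lq_tsum_of_nonneg hpq (fun k => by positivity) hw0 hz hw).trans_eq ?_
  rw [tsum_congr hz_pow, ← lp.norm_rpow_eq_tsum (by norm_num), ENNReal.toReal_ofNat,
    ← Real.rpow_mul (norm_nonneg _)]
  congr 2 <;> field_simp

theorem summable_pnat_rpow_neg_rpow {β q : ℝ} (h : 1 < β * q) :
    Summable fun k : ℕ+ => ((k : ℝ) ^ (-β)) ^ q := by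
  have := summable_pnat_iff_summable_nat.mpr
    (Real.summable_nat_rpow.mpr (show -(β * q) < -1 by linarith))
  refine this.congr fun k => ?_
  rw [← Real.rpow_mul (by positivity), neg_mul]

theorem summable_sqrt_div_one_add_abs_rpow {γ : ℝ} (hγ : 2 < γ) (c : ℝ) :
    Summable fun n : ℤ => √(c / (1 + |(n : ℝ)| ^ γ)) := by
  refine ((Real.summable_abs_int_rpow (b := γ / 2) (by linarith)).mul_left √|c|)
    |>.of_norm_bounded_eventually ?_
  filter_upwards [(Set.finite_singleton (0 : ℤ)).compl_mem_cofinite] with n hn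
  have hn : 0 < |(n : ℝ)| := by simpa using hn
  calc ‖√(c / (1 + |(n : ℝ)| ^ γ))‖ = √(c / (1 + |(n : ℝ)| ^ γ)) :=
        Real.norm_of_nonneg (Real.sqrt_nonneg _)
    _ ≤ √(|c| / |(n : ℝ)| ^ γ) := Real.sqrt_le_sqrt <|
      calc c / (1 + |(n : ℝ)| ^ γ) ≤ |c| / (1 + |(n : ℝ)| ^ γ) := by gcongr; exact le_abs_self c
        _ ≤ |c| / |(n : ℝ)| ^ γ := by gcongr; linarith
    _ = √|c| * |(n : ℝ)| ^ (-(γ / 2)) := by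
      rw [Real.sqrt_div (abs_nonneg c), Real.sqrt_eq_rpow (_ ^ γ), ← Real.rpow_mul hn.le,
        Real.rpow_neg hn.le, div_eq_mul_inv]
      ring_nf

theorem tsum_le_tsum_sqrt_mul_sqrt {ι : Type*} {f A : ι → ℝ} {B : ℝ} (hf0 : ∀ j, 0 ≤ f j)
    (hA : ∀ j, f j ≤ A j) (hB : ∀ j, f j ≤ B) (hsum : Summable fun j => √(A j)) :
    ∑' j, f j ≤ (∑' j, √(A j)) * √B := by
  have hle (j : ι) : f j ≤ √(A j) * √B := by
    rw [← Real.sqrt_mul ((hf0 j).trans (hA j)), ← Real.sqrt_mul_self (hf0 j)]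
    exact Real.sqrt_le_sqrt (mul_le_mul (hA j) (hB j) (hf0 j) ((hf0 j).trans (hA j)))
  rw [← hsum.tsum_mul_right]
  exact Summable.tsum_le_tsum hle (.of_nonneg_of_le hf0 hle (hsum.mul_right _)) (hsum.mul_right _)

theorem summable_and_tsum_pnat_le_tsum_int {g : ℤ → ℝ} (hg0 : ∀ n, 0 ≤ g n) (hg : Summable g)
    (i : ℕ+) : Summable (fun j : ℕ+ => g (j - i)) ∧ ∑' j : ℕ+, g (j - i) ≤ ∑' n, g n := by
  have he : Function.Injective fun j : ℕ+ => (j : ℤ) - i := fun j k h => by simpa using h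
  have hs : Summable (fun j : ℕ+ => g (j - i)) := hg.comp_injective he
  exact ⟨hs, hs.tsum_le_tsum_of_inj _ he (fun n _ => hg0 n) (fun _ => le_rfl) hg⟩

theorem summable_and_tsum_sqrt_decay_row_le {γ : ℝ} (hγ : 2 < γ) (c : ℝ) (i : ℕ+) :
    Summable (fun j : ℕ+ => √(c / (1 + |(i : ℝ) - j| ^ γ))) ∧
      ∑' j : ℕ+, √(c / (1 + |(i : ℝ) - j| ^ γ)) ≤ ∑' n : ℤ, √(c / (1 + |(n : ℝ)| ^ γ)) := by
  have hshift (j : ℕ+) : |(i : ℝ) - j| = |((j - i : ℤ) : ℝ)| := by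
    push_cast
    exact abs_sub_comm _ _
  simpa only [hshift] using summable_and_tsum_pnat_le_tsum_int (fun _ => Real.sqrt_nonneg _)
    (summable_sqrt_div_one_add_abs_rpow hγ c) i

theorem stmt_15_general (γ α β κγ κβ : ℝ) (hγ : 2 < γ) (hα : 1 / 2 < α) (hα1 : α ≤ 1)
    (hβ : 2 - α < 2 * β)
    (a : lp (fun _ : ℕ+ => ℝ) 2 → ℕ+ → ℕ+ → ℝ)
    (hoff : ∀ (x y : lp (fun _ : ℕ+ => ℝ) 2) (i j : ℕ+),
      |a x i j - a y i j| ≤ 2 * κγ / (1 + |(i : ℝ) - (j : ℝ)| ^ γ))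
    (hhold : ∀ (x y : lp (fun _ : ℕ+ => ℝ) 2) (i j : ℕ+),
      |a x i j - a y i j| ≤ κβ * ∑' k : ℕ+, |x k - y k| ^ α * (k : ℝ) ^ (-β)) :
    ∃ c : ℝ, 0 < c ∧ ∀ (x y : lp (fun _ : ℕ+ => ℝ) 2) (i : ℕ+),
      ∑' j : ℕ+, |a x i j - a y i j| ≤ c * ‖x - y‖ ^ (α / 2) := by
  have hα2 : α < 2 := by linarith
  have hw : Summable fun k : ℕ+ => ((k : ℝ) ^ (-β)) ^ (2 / (2 - α)) :=
    summable_pnat_rpow_neg_rpow (by rw [mul_div_assoc', lt_div_iff₀ (by linarith)]; linarith)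
  set W := (∑' k : ℕ+, ((k : ℝ) ^ (-β)) ^ (2 / (2 - α))) ^ ((2 - α) / 2)
  set Cβ := max κβ 0 * W
  set Sγ := ∑' n : ℤ, √(2 * κγ / (1 + |(n : ℝ)| ^ γ))
  have hSγ : 0 ≤ Sγ := tsum_nonneg fun _ => Real.sqrt_nonneg _
  refine ⟨Sγ * √Cβ + 1, by positivity, fun x y i => ?_⟩
  have hB (j : ℕ+) : |a x i j - a y i j| ≤ Cβ * ‖x - y‖ ^ α := by
    have hHolder := tsum_abs_rpow_mul_le_norm_rpow_mul (by linarith) hα2 (x - y)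
      (fun k => by positivity) hw
    simp only [lp.coeFn_sub, Pi.sub_apply] at hHolder
    calc |a x i j - a y i j| ≤ κβ * ∑' k : ℕ+, |x k - y k| ^ α * (k : ℝ) ^ (-β) := hhold x y i j
      _ ≤ max κβ 0 * ∑' k : ℕ+, |x k - y k| ^ α * (k : ℝ) ^ (-β) :=
        mul_le_mul_of_nonneg_right (le_max_left _ _) (tsum_nonneg fun k => by positivity)
      _ ≤ max κβ 0 * (‖x - y‖ ^ α * W) := mul_le_mul_of_nonneg_left hHolder (le_max_right _ _)
      _ = Cβ * ‖x - y‖ ^ α := by ring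
  obtain ⟨hrow, hrow_le⟩ := summable_and_tsum_sqrt_decay_row_le hγ (2 * κγ) i
  have hsqrt : √(Cβ * ‖x - y‖ ^ α) = √Cβ * ‖x - y‖ ^ (α / 2) := by
    rw [Real.sqrt_mul' _ (by positivity), Real.sqrt_eq_rpow (_ ^ α),
      ← Real.rpow_mul (norm_nonneg _)]
    ring_nf
  calc ∑' j, |a x i j - a y i j|
      ≤ (∑' j : ℕ+, √(2 * κγ / (1 + |(i : ℝ) - j| ^ γ))) * √(Cβ * ‖x - y‖ ^ α) :=
        tsum_le_tsum_sqrt_mul_sqrt (fun _ => abs_nonneg _) (hoff x y i) hB hrow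
    _ ≤ Sγ * (√Cβ * ‖x - y‖ ^ (α / 2)) := by rw [hsqrt]; gcongr
    _ ≤ (Sγ * √Cβ + 1) * ‖x - y‖ ^ (α / 2) := by
      rw [← mul_assoc]
      gcongr
      linarith

theorem stmt_15 (γ α β κγ κβ : ℝ) (hγ : 2 < γ) (hα : 1 / 2 < α) (hα1 : α ≤ 1)
    (hβ : 2 - α < 2 * β)
    (a : lp (fun _ : ℕ+ => ℝ) 2 → ℕ+ → ℕ+ → ℝ)
    (hsymm : ∀ x i j, a x i j = a x j i)
    (hoff : ∀ (x y : lp (fun _ : ℕ+ => ℝ) 2) (i j : ℕ+),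
      |a x i j - a y i j| ≤ 2 * κγ / (1 + |(i : ℝ) - (j : ℝ)| ^ γ))
    (hhold : ∀ (x y : lp (fun _ : ℕ+ => ℝ) 2) (i j : ℕ+),
      |a x i j - a y i j| ≤ κβ * ∑' k : ℕ+, |x k - y k| ^ α * (k : ℝ) ^ (-β)) :
    ∃ c : ℝ, 0 < c ∧ ∀ (x y : lp (fun _ : ℕ+ => ℝ) 2) (i : ℕ+),
      ∑' j : ℕ+, |a x i j - a y i j| ≤ c * ‖x - y‖ ^ (α / 2) :=
  stmt_15_general γ α β κγ κβ hγ hα hα1 hβ a hoff hhold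
end
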